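/- Under the assumptions of the iterative least-squares theorem (strict spectral gap σ_d > σ_{d+1} and rank(U_0^T U_d) = d), for every k ≥ 0 the iterative least-squares algorithm applied to R and the subspace iteration algorithm applied to R R^T starting from the same U_0 produce bases with equal column spaces: Col(U_k^{LS}) = Col(U_k^{SI}). -/
import Mathlib


open Matrix Finset

section Aux

lemma aux_range_mul {m n o : Type*} [Fintype m] [Fintype n] [Fintype o]
    (M : Matrix m n ℝ) (N : Matrix n o ℝ) :
    LinearMap.range ((M * N).mulVecLin) =
      Submodule.map M.mulVecLin (LinearMap.range N.mulVecLin) := by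
  rw [Matrix.mulVecLin_mul, LinearMap.range_comp]

lemma aux_range_mul_unit {m d : ℕ} (B : Matrix (Fin m) (Fin d) ℝ)
    (C : Matrix (Fin d) (Fin d) ℝ) (hC : IsUnit C) :
    LinearMap.range ((B * C).mulVecLin) = LinearMap.range B.mulVecLin := by
  rw [aux_range_mul]
  have : LinearMap.range C.mulVecLin = ⊤ := by
    rw [LinearMap.range_eq_top]
    exact Matrix.mulVec_surjective_iff_isUnit.2 hC
  rw [this, Submodule.map_top]

lemma aux_col_mem {m d : ℕ} (U : Matrix (Fin m) (Fin d) ℝ) (j : Fin d) :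
    (fun i => U i j) ∈ LinearMap.range U.mulVecLin := by
  refine ⟨Pi.single j 1, ?_⟩
  ext i
  simp [Matrix.mulVecLin_apply, Matrix.mulVec_single]

lemma aux_exists_factor {m d e : ℕ} (U : Matrix (Fin m) (Fin d) ℝ)
    (B : Matrix (Fin m) (Fin e) ℝ)
    (h : LinearMap.range U.mulVecLin ≤ LinearMap.range B.mulVecLin) :
    ∃ C : Matrix (Fin e) (Fin d) ℝ, U = B * C := by
  have hcol : ∀ j : Fin d, ∃ c : Fin e → ℝ, B.mulVec c = fun i => U i j := by
    intro j
    exact h (aux_col_mem U j)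
  choose c hc using hcol
  refine ⟨Matrix.of (fun l j => c j l), ?_⟩
  ext i j
  have := congrFun (hc j) i
  simpa [Matrix.mul_apply, Matrix.mulVec, dotProduct] using this.symm

lemma aux_on_inj {m d : ℕ} (U : Matrix (Fin m) (Fin d) ℝ) (hU : Uᵀ * U = 1) :
    Function.Injective U.mulVec := by
  intro x y hxy
  have h1 : (Uᵀ * U).mulVec x = (Uᵀ * U).mulVec y := by
    rw [← Matrix.mulVec_mulVec, ← Matrix.mulVec_mulVec, hxy]
  simpa [hU] using h1

lemma aux_inj_of_left_unit {m d : ℕ} (B : Matrix (Fin m) (Fin d) ℝ)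
    (Ud : Matrix (Fin m) (Fin d) ℝ) (h : IsUnit (Udᵀ * B)) :
    Function.Injective B.mulVec := by
  intro x y hxy
  have h2 : (Udᵀ * B).mulVec x = (Udᵀ * B).mulVec y := by
    rw [← Matrix.mulVec_mulVec, ← Matrix.mulVec_mulVec, hxy]
  exact Matrix.mulVec_injective_iff_isUnit.2 h h2

lemma aux_factor_unit {m d : ℕ} (U B : Matrix (Fin m) (Fin d) ℝ)
    (hU : Uᵀ * U = 1)
    (hle : LinearMap.range U.mulVecLin ≤ LinearMap.range B.mulVecLin)
    (hBinj : Function.Injective B.mulVec) :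
    ∃ C : Matrix (Fin d) (Fin d) ℝ, IsUnit C ∧ U = B * C := by
  obtain ⟨C, hC⟩ := aux_exists_factor U B hle
  have hCinj : Function.Injective C.mulVec := by
    intro x y hxy
    have h1 : U.mulVec x = U.mulVec y := by
      rw [hC, ← Matrix.mulVec_mulVec, ← Matrix.mulVec_mulVec, hxy]
    exact aux_on_inj U hU h1
  exact ⟨C, Matrix.mulVec_injective_iff_isUnit.1 hCinj, hC⟩

lemma aux_isUnit_of_rank {d : ℕ} (M : Matrix (Fin d) (Fin d) ℝ)
    (h : M.rank = d) : IsUnit M := by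
  have htop : LinearMap.range M.mulVecLin = ⊤ := by
    apply Submodule.eq_top_of_finrank_eq
    rw [show Module.finrank ℝ ↥(LinearMap.range M.mulVecLin) = M.rank from rfl, h]
    simp [Module.finrank_fin_fun]
  apply Matrix.mulVec_surjective_iff_isUnit.1
  intro y
  have hy : y ∈ LinearMap.range M.mulVecLin := by rw [htop]; trivial
  obtain ⟨x, hx⟩ := hy
  exact ⟨x, hx⟩

lemma aux_gram_unit {m d N : ℕ} (R : Matrix (Fin m) (Fin N) ℝ)
    (Ud U : Matrix (Fin m) (Fin d) ℝ)
    (h : IsUnit (Udᵀ * (R * Rᵀ * U))) :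
    IsUnit (((Uᵀ * R)) * (Uᵀ * R)ᵀ) := by
  set B : Matrix (Fin d) (Fin N) ℝ := Uᵀ * R with hB
  have hker : ∀ x : Fin d → ℝ, (B * Bᵀ).mulVec x = 0 → x = 0 := by
    intro x hx
    have hd : dotProduct x ((B * Bᵀ).mulVec x) = 0 := by rw [hx]; simp
    have hBtx : Bᵀ.mulVec x = 0 := by
      rw [← Matrix.mulVec_mulVec, Matrix.dotProduct_mulVec,
        ← Matrix.mulVec_transpose] at hd
      exact dotProduct_self_eq_zero.1 hd
    have hRB : R.mulVec (Bᵀ.mulVec x) = 0 := by rw [hBtx]; simp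
    have hRRU : (R * Rᵀ * U).mulVec x = 0 := by
      have hBt : Bᵀ = Rᵀ * U := by
        rw [hB, Matrix.transpose_mul, Matrix.transpose_transpose]
      rw [hBt, Matrix.mulVec_mulVec] at hRB
      rw [Matrix.mul_assoc]
      exact hRB
    have h2 : (Udᵀ * (R * Rᵀ * U)).mulVec x = 0 := by
      rw [← Matrix.mulVec_mulVec, hRRU]; simp
    have h3 : (Udᵀ * (R * Rᵀ * U)).mulVec 0 = 0 := by simp
    exact Matrix.mulVec_injective_iff_isUnit.2 h (h2.trans h3.symm)
  apply Matrix.mulVec_injective_iff_isUnit.1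
  intro x y hxy
  have := hker (x - y) (by rw [Matrix.mulVec_sub, hxy, sub_self])
  exact sub_eq_zero.mp this

lemma aux_dsum_mul {m N : ℕ} (a : ℝ) (f : Fin m → Fin N → ℝ) :
    ∑ j, ∑ i, a * f j i = a * ∑ j, ∑ i, f j i := by
  simp [Finset.mul_sum]

lemma aux_normal_eq {m d N : ℕ} (R : Matrix (Fin m) (Fin N) ℝ)
    (X : Matrix (Fin d) (Fin N) ℝ) (A : Matrix (Fin m) (Fin d) ℝ)
    (hmin : ∀ A' : Matrix (Fin m) (Fin d) ℝ,
      ∑ j, ∑ i, ((R - A * X) j i) ^ 2 ≤ ∑ j, ∑ i, ((R - A' * X) j i) ^ 2) :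
    A * (X * Xᵀ) = R * Xᵀ := by
  set E : Matrix (Fin m) (Fin N) ℝ := R - A * X with hE
  set G : Matrix (Fin m) (Fin d) ℝ := E * Xᵀ with hG
  set b : ℝ := ∑ j, ∑ l, (G j l) ^ 2 with hb
  set c : ℝ := ∑ j, ∑ i, ((G * X) j i) ^ 2 with hc
  have hS1 : ∑ j, ∑ i, E j i * (G * X) j i = b := by
    rw [hb]
    refine Finset.sum_congr rfl fun j _ => ?_
    calc ∑ i, E j i * (G * X) j i
        = ∑ i, ∑ l, E j i * (G j l * X l i) := by
          refine Finset.sum_congr rfl fun i _ => ?_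
          rw [Matrix.mul_apply, Finset.mul_sum]
      _ = ∑ l, ∑ i, E j i * (G j l * X l i) := Finset.sum_comm
      _ = ∑ l, G j l * ∑ i, E j i * X l i := by
          refine Finset.sum_congr rfl fun l _ => ?_
          rw [Finset.mul_sum]; refine Finset.sum_congr rfl fun i _ => by ring
      _ = ∑ l, (G j l) ^ 2 := by
          refine Finset.sum_congr rfl fun l _ => ?_
          have : ∑ i, E j i * X l i = G j l := by
            rw [hG, Matrix.mul_apply]
            simp [Matrix.transpose_apply]
          rw [this]; ring
  have key : ∀ t : ℝ, 0 ≤ t ^ 2 * c - 2 * t * b := by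
    intro t
    have h := hmin (A + t • G)
    have hEq : R - (A + t • G) * X = E - t • (G * X) := by
      rw [hE]; rw [Matrix.add_mul, Matrix.smul_mul]; abel
    rw [hEq] at h
    have hpt : ∀ j i, ((E - t • (G * X)) j i) ^ 2 =
        (E j i) ^ 2 + ((t ^ 2) * ((G * X) j i) ^ 2
          - (2 * t) * (E j i * (G * X) j i)) := by
      intro j i
      simp only [Matrix.sub_apply, Matrix.smul_apply, smul_eq_mul]
      ring
    have hexp : ∑ j, ∑ i, ((E - t • (G * X)) j i) ^ 2 =
        (∑ j, ∑ i, (E j i) ^ 2) + (t ^ 2 * c - 2 * t * b) := by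
      calc ∑ j, ∑ i, ((E - t • (G * X)) j i) ^ 2
          = ∑ j, ∑ i, ((E j i) ^ 2 + ((t ^ 2) * ((G * X) j i) ^ 2
              - (2 * t) * (E j i * (G * X) j i))) :=
            Finset.sum_congr rfl fun j _ =>
              Finset.sum_congr rfl fun i _ => hpt j i
        _ = (∑ j, ∑ i, (E j i) ^ 2)
            + ((∑ j, ∑ i, (t ^ 2) * ((G * X) j i) ^ 2)
              - (∑ j, ∑ i, (2 * t) * (E j i * (G * X) j i))) := by
            simp only [Finset.sum_add_distrib, Finset.sum_sub_distrib]
        _ = (∑ j, ∑ i, (E j i) ^ 2) + (t ^ 2 * c - 2 * t * b) := by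
            rw [aux_dsum_mul, aux_dsum_mul, hS1, ← hc]
    rw [hexp] at h
    linarith
  have hbnn : 0 ≤ b := Finset.sum_nonneg fun j _ =>
    Finset.sum_nonneg fun l _ => sq_nonneg _
  have hcnn : 0 ≤ c := Finset.sum_nonneg fun j _ =>
    Finset.sum_nonneg fun l _ => sq_nonneg _
  have hb0 : b = 0 := by
    by_contra hne
    have hbpos : 0 < b := lt_of_le_of_ne hbnn (Ne.symm hne)
    have ht := key (b / (c + 1))
    have hc1 : (0:ℝ) < c + 1 := by linarith
    have h2 : (b / (c + 1)) ^ 2 * c - 2 * (b / (c + 1)) * b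
        = (b ^ 2 * (c - 2 * (c + 1))) / (c + 1) ^ 2 := by
      field_simp
    rw [h2] at ht
    have h4 : (b ^ 2 * (c - 2 * (c + 1))) / (c + 1) ^ 2 < 0 := by
      apply div_neg_of_neg_of_pos
      · nlinarith [mul_pos hbpos hbpos]
      · positivity
    linarith
  have hG0 : G = 0 := by
    ext j l
    have h2 : ∀ j ∈ Finset.univ, (∑ l, (G j l) ^ 2 : ℝ) = 0 :=
      (Finset.sum_eq_zero_iff_of_nonneg fun j _ =>
        Finset.sum_nonneg fun l _ => sq_nonneg _).1 hb0
    have h3 := (Finset.sum_eq_zero_iff_of_nonneg fun l _ => sq_nonneg _).1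
      (h2 j (Finset.mem_univ j)) l (Finset.mem_univ l)
    simpa using pow_eq_zero_iff (n := 2) (by norm_num) |>.1 h3
  have h5 : (R - A * X) * Xᵀ = 0 := hG0
  rw [Matrix.sub_mul, sub_eq_zero] at h5
  rw [← Matrix.mul_assoc]
  exact h5.symm

end Aux

/-- Under a strict spectral gap `σ_d > σ_{d+1}` (expressed through the
top-d left singular space `Ud` of `R`: `R Rᵀ Ud = Ud L1` with `L1` invertible, `Ūd` an
orthonormal complement with `R Rᵀ Ūd = Ūd L2`, and `Col(Ud) ⊆ Col(R)`) and the
non-degeneracy condition `rank(U0ᵀ Ud) = d`, the iterative least-squares algorithm applied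
to `R` and the subspace-iteration algorithm applied to `R Rᵀ`, both started from the same
orthonormal `U0`, produce bases with equal column spaces: `Col(ULS k) = Col(USI k)` for
every `k ≥ 0`.  Each iteration step is characterized by:
LS: `A` minimizes `‖R − A (ULS k)ᵀ R‖_F²` and `ULS (k+1)` is an orthonormal basis
(Gram–Schmidt) of `Col(A)`; SI: `USI (k+1)` is an orthonormal basis of
`Col(R Rᵀ USI k)`. -/
theorem iterative_least_squares_eq_subspace_iterations
    (p d N : ℕ) (hN : p < N)
    (R : Matrix (Fin p) (Fin N) ℝ)
    (Ud U0 : Matrix (Fin p) (Fin d) ℝ) (Ubar : Matrix (Fin p) (Fin (p - d)) ℝ)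
    (L1 : Matrix (Fin d) (Fin d) ℝ) (L2 : Matrix (Fin (p - d)) (Fin (p - d)) ℝ)
    (hUd : Udᵀ * Ud = 1) (hUbar : Ubarᵀ * Ubar = 1) (horth : Udᵀ * Ubar = 0)
    (hspan : Ud * Udᵀ + Ubar * Ubarᵀ = 1)
    (hL1 : R * Rᵀ * Ud = Ud * L1) (hL1inv : IsUnit L1)
    (hL2 : R * Rᵀ * Ubar = Ubar * L2)
    (hColUd : LinearMap.range Ud.mulVecLin ≤ LinearMap.range R.mulVecLin)
    (hU0 : U0ᵀ * U0 = 1)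
    (hrank : (U0ᵀ * Ud).rank = d)
    (ULS USI : ℕ → Matrix (Fin p) (Fin d) ℝ)
    (hLS0 : ULS 0 = U0) (hSI0 : USI 0 = U0)
    (hLS : ∀ k, ∃ A : Matrix (Fin p) (Fin d) ℝ,
      (∀ A' : Matrix (Fin p) (Fin d) ℝ,
        ∑ j, ∑ i, ((R - A * ((ULS k)ᵀ * R)) j i) ^ 2 ≤
          ∑ j, ∑ i, ((R - A' * ((ULS k)ᵀ * R)) j i) ^ 2) ∧
      (ULS (k + 1))ᵀ * ULS (k + 1) = 1 ∧
      LinearMap.range (ULS (k + 1)).mulVecLin = LinearMap.range A.mulVecLin)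
    (hSI : ∀ k,
      (USI (k + 1))ᵀ * USI (k + 1) = 1 ∧
      LinearMap.range (USI (k + 1)).mulVecLin =
        LinearMap.range (R * Rᵀ * USI k).mulVecLin) :
    ∀ k, LinearMap.range (ULS k).mulVecLin = LinearMap.range (USI k).mulVecLin := by
  -- basic facts about the spectral data
  have hsym : (R * Rᵀ)ᵀ = R * Rᵀ := by
    rw [Matrix.transpose_mul, Matrix.transpose_transpose]
  have hUdRR : Udᵀ * (R * Rᵀ) = L1ᵀ * Udᵀ := by
    have h := congrArg Matrix.transpose hL1
    simp only [Matrix.transpose_mul, Matrix.transpose_transpose] at h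
    exact h
  have hL1T : IsUnit L1ᵀ := by
    rw [Matrix.isUnit_iff_isUnit_det, Matrix.det_transpose,
      ← Matrix.isUnit_iff_isUnit_det]
    exact hL1inv
  have hUdB : ∀ U : Matrix (Fin p) (Fin d) ℝ,
      Udᵀ * (R * Rᵀ * U) = L1ᵀ * (Udᵀ * U) := by
    intro U
    rw [← Matrix.mul_assoc, hUdRR, Matrix.mul_assoc]
  -- strengthened induction
  suffices H : ∀ k, LinearMap.range (ULS k).mulVecLin =
      LinearMap.range (USI k).mulVecLin ∧ IsUnit (Udᵀ * USI k) by
    exact fun k => (H k).1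
  intro k
  induction k with
  | zero =>
    constructor
    · rw [hLS0, hSI0]
    · rw [hSI0]
      apply aux_isUnit_of_rank
      have : Udᵀ * U0 = (U0ᵀ * Ud)ᵀ := by
        rw [Matrix.transpose_mul, Matrix.transpose_transpose]
      rw [this, Matrix.rank_transpose]
      exact hrank
  | succ k ih =>
    obtain ⟨hrange, hunit⟩ := ih
    -- orthonormality of the current iterates
    have hULSk_on : (ULS k)ᵀ * ULS k = 1 := by
      cases k with
      | zero => rw [hLS0]; exact hU0
      | succ k' => obtain ⟨A, -, hA2, -⟩ := hLS k'; exact hA2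
    have hUSIk_on : (USI k)ᵀ * USI k = 1 := by
      cases k with
      | zero => rw [hSI0]; exact hU0
      | succ k' => exact (hSI k').1
    -- transfer the unit condition to ULS k
    have hULSunit : IsUnit (Udᵀ * ULS k) := by
      obtain ⟨C, hCu, hCeq⟩ := aux_factor_unit (ULS k) (USI k) hULSk_on
        (le_of_eq hrange) (aux_on_inj _ hUSIk_on)
      rw [hCeq, ← Matrix.mul_assoc]
      exact hunit.mul hCu
    have hBLunit : IsUnit (Udᵀ * (R * Rᵀ * ULS k)) := by
      rw [hUdB]; exact hL1T.mul hULSunit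
    have hBSunit : IsUnit (Udᵀ * (R * Rᵀ * USI k)) := by
      rw [hUdB]; exact hL1T.mul hunit
    -- the LS step
    obtain ⟨A, hAmin, hA_on, hA_range⟩ := hLS k
    set X : Matrix (Fin d) (Fin N) ℝ := (ULS k)ᵀ * R with hX
    have hnorm : A * (X * Xᵀ) = R * Xᵀ := aux_normal_eq R X A hAmin
    have hMunit : IsUnit (X * Xᵀ) := aux_gram_unit R Ud (ULS k) hBLunit
    have hRXT : R * Xᵀ = R * Rᵀ * ULS k := by
      rw [hX, Matrix.transpose_mul, Matrix.transpose_transpose,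
        ← Matrix.mul_assoc]
    have hrangeA : LinearMap.range A.mulVecLin =
        LinearMap.range (R * Rᵀ * ULS k).mulVecLin := by
      rw [← hRXT, ← hnorm]
      exact (aux_range_mul_unit A (X * Xᵀ) hMunit).symm
    obtain ⟨hSI_on, hSI_range⟩ := hSI k
    have hmap : LinearMap.range (R * Rᵀ * ULS k).mulVecLin =
        LinearMap.range (R * Rᵀ * USI k).mulVecLin := by
      rw [aux_range_mul, aux_range_mul, hrange]
    constructor
    · rw [hA_range, hrangeA, hmap, hSI_range]
    · obtain ⟨C, hCu, hCeq⟩ := aux_factor_unit (USI (k+1)) (R * Rᵀ * USI k)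
        hSI_on (le_of_eq hSI_range) (aux_inj_of_left_unit _ Ud hBSunit)
      rw [hCeq, ← Matrix.mul_assoc]
      exact hBSunit.mul hCu
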